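/- Let w be a real n×n matrix with I − w invertible, Δ = (I − w)^{-1}, r = Δᵀ𝟙, s = Δᵀ(r ∘ w⁰), b_{ji} = r_j w⁰_j Δ_{ji}, c_i = w⁰_i v⁰_i. Define phase-dependent weights w_{g,i}^{(p)} = (θ_i/2)(1 + w⁰_i v_i^{(p−1)}) and w_{b,i}^{(p)} = (θ_i/2)(1 − w⁰_i v_i^{(p−1)}), with v^(0) = v⁰, v^(p) = Δ(w⁰ ∘ v^{(p−1)} + w_g^{(p)} ∘ x^(p) − w_b^{(p)} ∘ y^(p)) for p = 1, 2. Then ∑_i v_i^(2) = ∑_i ∑_j c_i b_{ji} + ∑_j x_j^(2) (θ_j/2)(∑_i c_i b_{ji} + r_j) + ∑_j y_j^(2) (θ_j/2)(∑_i c_i b_{ji} − r_j) + ∑_i x_i^(1) (θ_i/2)(1 + c_i)( s_i + ∑_j x_j^(2) (θ_j/2) b_{ji} + ∑_j y_j^(2) (θ_j/2) b_{ji} ) − ∑_i y_i^(1) (θ_i/2)(1 − c_i)( s_i + ∑_j x_j^(2) (θ_j/2) b_{ji} + ∑_j y_j^(2) (θ_j/2) b_{ji} ). -/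

import Mathlib

/-!
Write `v⁽ᵖ⁾ = Δ u⁽ᵖ⁾`. The entries of `Δ u` sum to `∑ⱼ rⱼ uⱼ`, so `∑ᵢ v⁽²⁾ᵢ` is affine in `v⁽¹⁾` with
slope `r ∘ w⁰ ∘ (1 + (θ/2) ∘ (x⁽²⁾ + y⁽²⁾))`. Substituting `v⁽¹⁾ = Δ u⁽¹⁾` and moving `Δ` onto that
slope turns the objective into `∑ᵢ Tᵢ u⁽¹⁾ᵢ` plus the direct phase-2 terms, where
`Tᵢ = sᵢ + ∑ⱼ (θⱼ/2)(x⁽²⁾ⱼ + y⁽²⁾ⱼ) bⱼᵢ`; expanding `u⁽¹⁾ = c + (θ/2)(1 + c) x⁽¹⁾ − (θ/2)(1 − c) y⁽¹⁾`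
gives the formula.
-/

open Matrix BigOperators Finset

section

variable {m n R : Type*} [Fintype m] [Fintype n]

theorem sum_mul_mulVec [NonUnitalSemiring R] (q : m → R) (A : Matrix m n R) (u : n → R) :
    ∑ i, q i * (A *ᵥ u) i = ∑ j, (∑ i, q i * A i j) * u j :=
  dotProduct_mulVec q A u

theorem sum_mul_sum_mul_comm [CommSemiring R] (f : n → R) (g : m → R) (A : Matrix m n R) :
    ∑ i, f i * ∑ j, g j * A j i = ∑ j, g j * ∑ i, f i * A j i := by
  simp only [mul_sum]
  rw [sum_comm]
  exact sum_congr rfl fun j _ => sum_congr rfl fun i _ => by ring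

theorem sum_mulVec_phaseUpdate [Field R] (Δ : Matrix m n R) (r : n → R)
    (hr : ∀ j, r j = ∑ i, Δ i j) (w0 θ v x y : n → R) :
    ∑ i, (Δ *ᵥ fun j => w0 j * v j
      + (θ j / 2 * (1 + w0 j * v j)) * x j - (θ j / 2 * (1 - w0 j * v j)) * y j) i
      = ∑ j, r j * w0 j * (1 + θ j / 2 * (x j + y j)) * v j
        + ∑ j, x j * (θ j / 2) * r j - ∑ j, y j * (θ j / 2) * r j := by
  have h := sum_mul_mulVec (fun _ => (1 : R)) Δ (fun j => w0 j * v j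
      + (θ j / 2 * (1 + w0 j * v j)) * x j - (θ j / 2 * (1 - w0 j * v j)) * y j)
  simp only [one_mul, ← hr] at h
  rw [h, ← sum_add_distrib, ← sum_sub_distrib]
  exact sum_congr rfl fun j _ => by ring

end

theorem dependency_two_camp_objective_general (n : ℕ) (Δ : Matrix (Fin n) (Fin n) ℝ)
    (w0 θ v0 x1 x2 y1 y2 : Fin n → ℝ)
    (r : Fin n → ℝ) (hr : ∀ i, r i = ∑ j, Δ j i)
    (s : Fin n → ℝ) (hs : ∀ i, s i = ∑ j, r j * w0 j * Δ j i)
    (b : Matrix (Fin n) (Fin n) ℝ) (hb : ∀ j i, b j i = r j * w0 j * Δ j i)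
    (c : Fin n → ℝ) (hc : ∀ i, c i = w0 i * v0 i)
    (v1 v2 : Fin n → ℝ)
    (hv1 : v1 = Δ.mulVec (fun i => w0 i * v0 i
      + (θ i / 2 * (1 + w0 i * v0 i)) * x1 i - (θ i / 2 * (1 - w0 i * v0 i)) * y1 i))
    (hv2 : v2 = Δ.mulVec (fun i => w0 i * v1 i
      + (θ i / 2 * (1 + w0 i * v1 i)) * x2 i - (θ i / 2 * (1 - w0 i * v1 i)) * y2 i)) :
    ∑ i, v2 i =
      (∑ i, ∑ j, c i * b j i)
        + (∑ j, x2 j * (θ j / 2) * ((∑ i, c i * b j i) + r j))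
        + (∑ j, y2 j * (θ j / 2) * ((∑ i, c i * b j i) - r j))
        + (∑ i, x1 i * (θ i / 2) * (1 + c i) *
            (s i + (∑ j, x2 j * (θ j / 2) * b j i) + (∑ j, y2 j * (θ j / 2) * b j i)))
        - (∑ i, y1 i * (θ i / 2) * (1 - c i) *
            (s i + (∑ j, x2 j * (θ j / 2) * b j i) + (∑ j, y2 j * (θ j / 2) * b j i))) := by
  set T : Fin n → ℝ := fun i =>
    s i + (∑ j, x2 j * (θ j / 2) * b j i) + (∑ j, y2 j * (θ j / 2) * b j i) with hT_def
  have hT : ∀ i, ∑ j, r j * w0 j * (1 + θ j / 2 * (x2 j + y2 j)) * Δ j i = T i := fun i => by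
    simp only [hT_def, hs, hb, ← sum_add_distrib]
    exact sum_congr rfl fun j _ => by ring
  have hobjective : ∑ i, v2 i = ∑ i, T i * (w0 i * v0 i
      + (θ i / 2 * (1 + w0 i * v0 i)) * x1 i - (θ i / 2 * (1 - w0 i * v0 i)) * y1 i)
        + ∑ j, x2 j * (θ j / 2) * r j - ∑ j, y2 j * (θ j / 2) * r j := by
    rw [hv2, sum_mulVec_phaseUpdate Δ r hr, hv1, sum_mul_mulVec]
    simp only [hT]
  have hcT : ∑ i, c i * T i = ∑ i, ∑ j, c i * b j i
      + ∑ j, x2 j * (θ j / 2) * ∑ i, c i * b j i + ∑ j, y2 j * (θ j / 2) * ∑ i, c i * b j i := by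
    simp only [hT_def, mul_add, sum_add_distrib, hs, ← hb, sum_mul_sum_mul_comm]
    simp only [mul_sum]
  have hu1_split : ∀ i, T i * (w0 i * v0 i
      + (θ i / 2 * (1 + w0 i * v0 i)) * x1 i - (θ i / 2 * (1 - w0 i * v0 i)) * y1 i)
      = c i * T i + x1 i * (θ i / 2) * (1 + c i) * T i - y1 i * (θ i / 2) * (1 - c i) * T i :=
    fun i => by rw [hc]; ring
  rw [hobjective, sum_congr rfl fun i _ => hu1_split i, sum_sub_distrib, sum_add_distrib,
    hcT, hT_def]
  simp only [mul_add (x2 _ * (θ _ / 2)), mul_sub (y2 _ * (θ _ / 2)), sum_add_distrib,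
    sum_sub_distrib]
  ring

/-- Two-camp two-phase objective in the dependency setting: with `Δ = (I − w)⁻¹`,
`r = Δᵀ𝟙`, `s = Δᵀ(r ∘ w⁰)`, `b_{ji} = r_j w⁰_j Δ_{ji}`, `c_i = w⁰_i v⁰_i`,
phase-dependent weights `w_{g,i}^{(p)} = (θᵢ/2)(1 + w⁰ᵢ vᵢ^{(p−1)})`,
`w_{b,i}^{(p)} = (θᵢ/2)(1 − w⁰ᵢ vᵢ^{(p−1)})`, and phase opinions
`v^(p) = Δ(w⁰ ∘ v^{(p−1)} + w_g^{(p)} ∘ x^(p) − w_b^{(p)} ∘ y^(p))` for `p = 1, 2`,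
the stated expansion of `∑ᵢ vᵢ^(2)` holds. -/
theorem dependency_two_camp_objective (n : ℕ) (w Δ : Matrix (Fin n) (Fin n) ℝ)
    (hinv : IsUnit (1 - w)) (hΔ : Δ = (1 - w)⁻¹)
    (w0 θ v0 x1 x2 y1 y2 : Fin n → ℝ)
    (r : Fin n → ℝ) (hr : ∀ i, r i = ∑ j, Δ j i)
    (s : Fin n → ℝ) (hs : ∀ i, s i = ∑ j, r j * w0 j * Δ j i)
    (b : Matrix (Fin n) (Fin n) ℝ) (hb : ∀ j i, b j i = r j * w0 j * Δ j i)
    (c : Fin n → ℝ) (hc : ∀ i, c i = w0 i * v0 i)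
    (v1 v2 : Fin n → ℝ)
    (hv1 : v1 = Δ.mulVec (fun i => w0 i * v0 i
      + (θ i / 2 * (1 + w0 i * v0 i)) * x1 i - (θ i / 2 * (1 - w0 i * v0 i)) * y1 i))
    (hv2 : v2 = Δ.mulVec (fun i => w0 i * v1 i
      + (θ i / 2 * (1 + w0 i * v1 i)) * x2 i - (θ i / 2 * (1 - w0 i * v1 i)) * y2 i)) :
    ∑ i, v2 i =
      (∑ i, ∑ j, c i * b j i)
        + (∑ j, x2 j * (θ j / 2) * ((∑ i, c i * b j i) + r j))
        + (∑ j, y2 j * (θ j / 2) * ((∑ i, c i * b j i) - r j))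
        + (∑ i, x1 i * (θ i / 2) * (1 + c i) *
            (s i + (∑ j, x2 j * (θ j / 2) * b j i) + (∑ j, y2 j * (θ j / 2) * b j i)))
        - (∑ i, y1 i * (θ i / 2) * (1 - c i) *
            (s i + (∑ j, x2 j * (θ j / 2) * b j i) + (∑ j, y2 j * (θ j / 2) * b j i))) :=
  dependency_two_camp_objective_general n Δ w0 θ v0 x1 x2 y1 y2 r hr s hs b hb c hc v1 v2 hv1 hv2
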